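/- Applying the operator (1 - (1/4)∂_x²) ∘ ∑_{r≥0} (-(1/4)∂_x²)^r to x^n gives e_n^{(2)}(x, -1/4) - (n(n-1)/4)·e_{n-2}^{(2)}(x, -1/4), where e_n^{(2)}(x,y) = n! ∑_{r=0}^{⌊n/2⌋} x^{n-2r} y^r/(n-2r)!. -/

import Mathlib

open Finset

/-- Second-order two-variable truncated exponential polynomials. -/
noncomputable def truncExp2 (n : ℕ) (x y : ℝ) : ℝ :=
  (n.factorial : ℝ) *
    ∑ r ∈ range (n / 2 + 1), x ^ (n - 2 * r) * y ^ r / ((n - 2 * r).factorial : ℝ)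

/-!
Since `∂ₓ^{2r} xⁿ = n(n-1)⋯(n-2r+1) x^{n-2r} = n!/(n-2r)! · x^{n-2r}`, the series
`∑ (-1/4)ʳ ∂ₓ^{2r} xⁿ` is exactly `e_n^{(2)}(x, -1/4)`. The `e_n^{(2)}(·, y)` form an Appell
sequence, `∂ₓ e_n^{(2)} = n e_{n-1}^{(2)}`, so applying `1 - (1/4)∂ₓ²` gives the stated combination.
-/

theorem Nat.descFactorial_mul_sub (n k : ℕ) :
    n.descFactorial k * (n - k) = n * (n - 1).descFactorial k := by
  cases n with
  | zero => simp
  | succ n =>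
    rw [mul_comm, ← Nat.descFactorial_succ, Nat.succ_descFactorial_succ, Nat.add_sub_cancel]

theorem truncExp2_eq_sum_descFactorial (n : ℕ) (x y : ℝ) {N : ℕ} (hN : n / 2 < N) :
    truncExp2 n x y = ∑ r ∈ range N, y ^ r * (n.descFactorial (2 * r) * x ^ (n - 2 * r)) := by
  have hsub : range (n / 2 + 1) ⊆ range N := range_subset_range.2 hN
  rw [← sum_subset hsub, truncExp2, mul_sum]
  · refine sum_congr rfl fun r hr => ?_
    have h2r : 2 * r ≤ n := by rw [mem_range] at hr; omega
    rw [← Nat.factorial_mul_descFactorial h2r]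
    have hfac := (n - 2 * r).factorial_pos
    field_simp
    push_cast
    ring
  · intro r _ hr
    have hlt : n < 2 * r := by rw [mem_range] at hr; omega
    simp [Nat.descFactorial_eq_zero_iff_lt.2 hlt]

theorem truncExp2_eq_sum_iteratedDeriv_pow (n : ℕ) (x y : ℝ) :
    truncExp2 n x y =
      ∑ r ∈ range (n + 1), y ^ r * iteratedDeriv (2 * r) (fun t : ℝ => t ^ n) x := by
  simp only [iteratedDeriv_pow]
  exact truncExp2_eq_sum_descFactorial n x y (by omega)

theorem hasDerivAt_truncExp2 (n : ℕ) (x y : ℝ) :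
    HasDerivAt (truncExp2 n · y) (n * truncExp2 (n - 1) x y) x := by
  have hN : n / 2 < n + 1 := by omega
  have hN' : (n - 1) / 2 < n + 1 := by omega
  simp only [truncExp2_eq_sum_descFactorial _ _ y hN, truncExp2_eq_sum_descFactorial _ x y hN',
    mul_sum]
  refine HasDerivAt.fun_sum fun r _ => ?_
  refine (((hasDerivAt_pow (n - 2 * r) x).const_mul _).const_mul (y ^ r)).congr_deriv ?_
  rw [show n - 1 - 2 * r = n - 2 * r - 1 by omega]
  have key :
      (n.descFactorial (2 * r) : ℝ) * (n - 2 * r : ℕ) = n * (n - 1).descFactorial (2 * r) := by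
    exact_mod_cast Nat.descFactorial_mul_sub n (2 * r)
  linear_combination y ^ r * x ^ (n - 2 * r - 1) * key

theorem deriv_truncExp2 (n : ℕ) (y : ℝ) :
    deriv (truncExp2 n · y) = fun x => n * truncExp2 (n - 1) x y :=
  funext fun x => (hasDerivAt_truncExp2 n x y).deriv

theorem iteratedDeriv_two_truncExp2 (n : ℕ) (x y : ℝ) :
    iteratedDeriv 2 (truncExp2 n · y) x = n * (n - 1) * truncExp2 (n - 2) x y := by
  rw [iteratedDeriv_succ, iteratedDeriv_one, deriv_truncExp2, deriv_const_mul_field',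
    deriv_truncExp2]
  rcases n with _ | n
  · simp
  · rw [show n + 1 - 1 - 1 = n + 1 - 2 by omega]
    push_cast
    ring

/-- Applying `(1 - (1/4)∂_x²) ∘ ∑_{r≥0} (-(1/4)∂_x²)^r` to `x^n` gives
`e_n^{(2)}(x,-1/4) - (n(n-1)/4) e_{n-2}^{(2)}(x,-1/4)`. -/
theorem pade11_He_eq (n : ℕ) (x : ℝ) :
    (fun x : ℝ => ∑ r ∈ range (n + 1),
        (-(1 / 4) : ℝ) ^ r * iteratedDeriv (2 * r) (fun t : ℝ => t ^ n) x) x -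
      (1 / 4) * iteratedDeriv 2 (fun x : ℝ => ∑ r ∈ range (n + 1),
        (-(1 / 4) : ℝ) ^ r * iteratedDeriv (2 * r) (fun t : ℝ => t ^ n) x) x =
    truncExp2 n x (-(1 / 4)) -
      ((n : ℝ) * ((n : ℝ) - 1) / 4) * truncExp2 (n - 2) x (-(1 / 4)) := by
  have hsum : (fun x : ℝ => ∑ r ∈ range (n + 1),
      (-(1 / 4) : ℝ) ^ r * iteratedDeriv (2 * r) (fun t : ℝ => t ^ n) x) =
      (truncExp2 n · (-(1 / 4))) :=
    funext fun x => (truncExp2_eq_sum_iteratedDeriv_pow n x _).symm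
  rw [hsum, iteratedDeriv_two_truncExp2]
  ring
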